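/- arXiv:2301.10807 — 2 statements merged into one kernel-verified Lean document; each statement's English description precedes it below -/
import Mathlib

section
/- Limits of witness-providing structures provide witnesses: let (M_k)_{k≥0} be epistemic transition structures over a common basis with RT_k(M_{k'}) = RT_k(M_k) for all k' ≥ k ≥ 0, and let M_ω have transition relation ⋃_{k≥0} RT_k(M_k). If each M_k provides epistemic witnesses (for all knowledge formulas), then so does M_ω. -/
namespace KBP

/-- `k`-step reachable states of a transition system with initial states `S0`. -/
def RSk {S : Type} (S0 : Set S) (T : Set (S × S)) : ℕ → Set S
  | 0 => S0
  | k + 1 => RSk S0 T k ∪ {s' | ∃ s ∈ RSk S0 T k, (s, s') ∈ T}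

/-- `k`-step reachable transitions. -/
def RTk {S : Type} (S0 : Set S) (T : Set (S × S)) : ℕ → Set (S × S)
  | 0 => ∅
  | k + 1 => RTk S0 T k ∪ {p | p ∈ T ∧ p.1 ∈ RSk S0 T k}

/-- All reachable states. -/
def Reach {S : Type} (S0 : Set S) (T : Set (S × S)) : Set S := ⋃ k, RSk S0 T k

/-- Epistemic formulas (with the abbreviations `true`, `∨`, `M` as primitives). -/
inductive EFrm (P A : Type) : Type
  | prop : P → EFrm P A
  | nprop : P → EFrm P A
  | fls : EFrm P A
  | tru : EFrm P A
  | neg : EFrm P A → EFrm P A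
  | and : EFrm P A → EFrm P A → EFrm P A
  | or : EFrm P A → EFrm P A → EFrm P A
  | K : A → EFrm P A → EFrm P A
  | M : A → EFrm P A → EFrm P A

/-- Ordinary (Kripke) satisfaction over the reachable part of an epistemic
transition structure with transition relation `T`. -/
def ksat (E : A → Set (S × S)) (L : S → Set P) (S0 : Set S)
    (T : Set (S × S)) : S → EFrm P A → Prop
  | s, .prop p => p ∈ L s
  | s, .nprop p => p ∉ L s
  | _, .fls => False
  | _, .tru => True
  | s, .neg φ => ¬ ksat E L S0 T s φ
  | s, .and φ ψ => ksat E L S0 T s φ ∧ ksat E L S0 T s ψ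
  | s, .or φ ψ => ksat E L S0 T s φ ∨ ksat E L S0 T s ψ
  | s, .K a φ => ∀ s' ∈ Reach S0 T, (s, s') ∈ E a → ksat E L S0 T s' φ
  | s, .M a φ => ∃ s' ∈ Reach S0 T, (s, s') ∈ E a ∧ ksat E L S0 T s' φ

/-- `T` provides epistemic witnesses for the knowledge formula `K a φ`. -/
def providesWitness (E : A → Set (S × S)) (L : S → Set P) (S0 : Set S)
    (T : Set (S × S)) (a : A) (φ : EFrm P A) : Prop :=
  ∀ k : ℕ, ∀ s ∈ RSk S0 T k, ¬ ksat E L S0 T s (.K a φ) →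
    ∃ s' ∈ RSk S0 T k, (s, s') ∈ E a ∧ ¬ ksat E L S0 T s' φ

section Aux

variable {S : Type}


lemma RSk_mono (S0 : Set S) (T : Set (S × S)) {k k' : ℕ} (h : k ≤ k') :
    RSk S0 T k ⊆ RSk S0 T k' := by
  induction h with
  | refl => exact fun _ h => h
  | step _ ih => exact fun s hs => Or.inl (ih hs)

lemma RTk_mono_succ (S0 : Set S) (T : Set (S × S)) (j : ℕ) :
    RTk S0 T j ⊆ RTk S0 T (j+1) := fun p hp => Or.inl hp

lemma mem_RTk_succ (S0 : Set S) (T : Set (S × S)) (j : ℕ) (p : S × S) :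
    p ∈ RTk S0 T (j+1) ↔ p ∈ T ∧ p.1 ∈ RSk S0 T j := by
  induction j with
  | zero =>
    show p ∈ (∅ : Set (S × S)) ∪ _ ↔ _
    simp [RSk]
  | succ j ih =>
    constructor
    · rintro (h | h)
      · obtain ⟨h1, h2⟩ := ih.mp h
        exact ⟨h1, Or.inl h2⟩
      · exact h
    · intro h
      exact Or.inr h

lemma RTk_subset (S0 : Set S) (T : Set (S × S)) (j : ℕ) :
    RTk S0 T j ⊆ T := by
  cases j with
  | zero => exact fun p hp => hp.elim
  | succ j => exact fun p hp => ((mem_RTk_succ S0 T j p).mp hp).1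

lemma RSk_char (S0 : Set S) (T : Set (S × S)) (j : ℕ) :
    RSk S0 T j = S0 ∪ {s' | ∃ s, (s, s') ∈ RTk S0 T j} := by
  induction j with
  | zero => simp [RSk, RTk]
  | succ j ih =>
    ext s'
    constructor
    · rintro (h | ⟨s, hs, hT⟩)
      · rw [ih] at h
        rcases h with h | ⟨s, hs⟩
        · exact Or.inl h
        · exact Or.inr ⟨s, RTk_mono_succ S0 T j hs⟩
      · exact Or.inr ⟨s, (mem_RTk_succ S0 T j (s, s')).mpr ⟨hT, hs⟩⟩
    · rintro (h | ⟨s, hs⟩)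
      · exact Or.inl (ih ▸ Or.inl h)
      · obtain ⟨hT, hR⟩ := (mem_RTk_succ S0 T j (s, s')).mp hs
        exact Or.inr ⟨s, hR, hT⟩

lemma RSk_eq_of_RTk_eq {S0 : Set S} {T T' : Set (S × S)} {j : ℕ}
    (h : RTk S0 T j = RTk S0 T' j) : RSk S0 T j = RSk S0 T' j := by
  rw [RSk_char, RSk_char, h]

lemma RTk_omega (S0 : Set S) (T : ℕ → Set (S × S))
    (hcoh : ∀ k k' : ℕ, k ≤ k' → RTk S0 (T k') k = RTk S0 (T k) k) (j : ℕ) :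
    RTk S0 (⋃ k, RTk S0 (T k) k) j = RTk S0 (T j) j := by
  induction j with
  | zero => rfl
  | succ j ih =>
    ext p
    rw [mem_RTk_succ, mem_RTk_succ, RSk_eq_of_RTk_eq ih,
      RSk_eq_of_RTk_eq (hcoh j (j+1) (Nat.le_succ j))]
    constructor
    · rintro ⟨hp, hp1⟩
      rcases Set.mem_iUnion.mp hp with ⟨i, hi⟩
      refine ⟨?_, hp1⟩
      rcases le_total i (j+1) with hij | hij
      · exact RTk_subset S0 (T (j+1)) i ((hcoh i (j+1) hij ▸ hi : p ∈ RTk S0 (T (j+1)) i))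
      · have hpi : p ∈ T i := RTk_subset S0 (T i) i hi
        have h1 : p.1 ∈ RSk S0 (T i) j := by
          rw [RSk_eq_of_RTk_eq (hcoh j i (le_trans (Nat.le_succ j) hij))]
          exact hp1
        have : p ∈ RTk S0 (T i) (j+1) := (mem_RTk_succ S0 (T i) j p).mpr ⟨hpi, h1⟩
        rw [hcoh (j+1) i hij] at this
        exact RTk_subset S0 (T (j+1)) (j+1) this
    · rintro ⟨hp, hp1⟩
      have h1 : p.1 ∈ RSk S0 (T (j+1)) j := by
        rw [RSk_eq_of_RTk_eq (hcoh j (j+1) (Nat.le_succ j))]; exact hp1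
      exact ⟨Set.mem_iUnion.mpr ⟨j+1, (mem_RTk_succ S0 (T (j+1)) j p).mpr ⟨hp, h1⟩⟩, hp1⟩


end Aux

section Transfer


variable {S P A : Type}

lemma mem_Reach_of_RSk {S0 : Set S} {T : Set (S × S)} {k : ℕ} {s : S}
    (h : s ∈ RSk S0 T k) : s ∈ Reach S0 T := Set.mem_iUnion.mpr ⟨k, h⟩

/-- Key transfer lemma: on the `m`-reachable part, satisfaction in `T m`
agrees with satisfaction in the limit. -/
lemma ksat_transfer (E : A → Set (S × S)) (L : S → Set P) (S0 : Set S)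
    (T : ℕ → Set (S × S))
    (hcoh : ∀ k k' : ℕ, k ≤ k' → RTk S0 (T k') k = RTk S0 (T k) k)
    (hwit : ∀ k : ℕ, ∀ (a : A) (φ : EFrm P A), providesWitness E L S0 (T k) a φ)
    (φ : EFrm P A) :
    ∀ (m : ℕ) (s : S), s ∈ RSk S0 (T m) m →
      (ksat E L S0 (T m) s φ ↔ ksat E L S0 (⋃ k, RTk S0 (T k) k) s φ) := by
  set Tω : Set (S × S) := ⋃ k, RTk S0 (T k) k with hTω
  -- basic facts used throughout
  have hRSω : ∀ j : ℕ, RSk S0 Tω j = RSk S0 (T j) j := fun j =>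
    RSk_eq_of_RTk_eq (RTk_omega S0 T hcoh j)
  have hRScoh : ∀ {m M : ℕ}, m ≤ M → RSk S0 (T M) m = RSk S0 (T m) m :=
    fun {m M} h => RSk_eq_of_RTk_eq (hcoh m M h)
  induction φ with
  | prop p => intro m s _; simp [ksat]
  | nprop p => intro m s _; simp [ksat]
  | fls => intro m s _; simp [ksat]
  | tru => intro m s _; simp [ksat]
  | neg φ ih => intro m s hs; simpa [ksat] using not_congr (ih m s hs)
  | and φ ψ ihφ ihψ =>
    intro m s hs; simpa [ksat] using and_congr (ihφ m s hs) (ihψ m s hs)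
  | or φ ψ ihφ ihψ =>
    intro m s hs; simpa [ksat] using or_congr (ihφ m s hs) (ihψ m s hs)
  | K a φ ih =>
    intro m s hs
    show (∀ s' ∈ Reach S0 (T m), (s, s') ∈ E a → ksat E L S0 (T m) s' φ) ↔
      (∀ s' ∈ Reach S0 Tω, (s, s') ∈ E a → ksat E L S0 Tω s' φ)
    constructor
    · intro hK s' hs' hE
      by_contra hns
      obtain ⟨j, hj⟩ := Set.mem_iUnion.mp hs'
      rw [hRSω j] at hj
      set M := max m j with hM
      have hsM : s ∈ RSk S0 (T M) m := by rw [hRScoh (le_max_left m j)]; exact hs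
      have hs'M : s' ∈ RSk S0 (T M) M := by
        refine RSk_mono S0 (T M) (le_max_right m j) ?_
        rw [hRScoh (le_max_right m j)]; exact hj
      have hns' : ¬ ksat E L S0 (T M) s' φ := fun h => hns ((ih M s' hs'M).mp h)
      have hKM : ¬ ksat E L S0 (T M) s (.K a φ) := by
        intro h
        exact hns' (h s' (mem_Reach_of_RSk hs'M) hE)
      obtain ⟨s'', hs'', hE'', hns''⟩ := hwit M a φ m s hsM hKM
      have hs''m : s'' ∈ RSk S0 (T m) m := by rw [← hRScoh (le_max_left m j)]; exact hs''
      have hs''M : s'' ∈ RSk S0 (T M) M := RSk_mono S0 (T M) (le_max_left m j) hs''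
      have h1 : ksat E L S0 (T m) s'' φ := hK s'' (mem_Reach_of_RSk hs''m) hE''
      exact hns'' ((ih M s'' hs''M).mpr ((ih m s'' hs''m).mp h1))
    · intro hK s' hs' hE
      by_contra hns
      have hKm : ¬ ksat E L S0 (T m) s (.K a φ) := fun h => hns (h s' hs' hE)
      obtain ⟨s'', hs'', hE'', hns''⟩ := hwit m a φ m s hs hKm
      have : ksat E L S0 Tω s'' φ := by
        refine hK s'' ?_ hE''
        exact mem_Reach_of_RSk (by rw [hRSω m]; exact hs'')
      exact hns'' ((ih m s'' hs'').mpr this)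
  | M a φ ih =>
    intro m s hs
    show (∃ s' ∈ Reach S0 (T m), (s, s') ∈ E a ∧ ksat E L S0 (T m) s' φ) ↔
      (∃ s' ∈ Reach S0 Tω, (s, s') ∈ E a ∧ ksat E L S0 Tω s' φ)
    constructor
    · rintro ⟨s', hs', hE, hφ⟩
      have hKm : ¬ ksat E L S0 (T m) s (.K a φ.neg) := by
        intro h
        exact (h s' hs' hE) hφ
      obtain ⟨s'', hs'', hE'', hns''⟩ := hwit m a φ.neg m s hs hKm
      have hφ'' : ksat E L S0 (T m) s'' φ := not_not.mp hns''
      exact ⟨s'', mem_Reach_of_RSk (by rw [hRSω m]; exact hs''),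
        hE'', (ih m s'' hs'').mp hφ''⟩
    · rintro ⟨s', hs', hE, hφ⟩
      obtain ⟨j, hj⟩ := Set.mem_iUnion.mp hs'
      rw [hRSω j] at hj
      set M := max m j with hM
      have hsM : s ∈ RSk S0 (T M) m := by rw [hRScoh (le_max_left m j)]; exact hs
      have hs'M : s' ∈ RSk S0 (T M) M := by
        refine RSk_mono S0 (T M) (le_max_right m j) ?_
        rw [hRScoh (le_max_right m j)]; exact hj
      have hφM : ksat E L S0 (T M) s' φ := (ih M s' hs'M).mpr hφ
      have hKM : ¬ ksat E L S0 (T M) s (.K a φ.neg) := by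
        intro h
        exact (h s' (mem_Reach_of_RSk hs'M) hE) hφM
      obtain ⟨s'', hs'', hE'', hns''⟩ := hwit M a φ.neg m s hsM hKM
      have hs''m : s'' ∈ RSk S0 (T m) m := by rw [← hRScoh (le_max_left m j)]; exact hs''
      have hs''M : s'' ∈ RSk S0 (T M) M := RSk_mono S0 (T M) (le_max_left m j) hs''
      have hφ'' : ksat E L S0 (T M) s'' φ := not_not.mp hns''
      exact ⟨s'', mem_Reach_of_RSk hs''m, hE'',
        (ih m s'' hs''m).mpr ((ih M s'' hs''M).mp hφ'')⟩


end Transfer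

/-- Limits of witness-providing structures provide witnesses: for a coherent
sequence `(Mₖ)` over a common basis, if each `Mₖ` provides epistemic witnesses
for all knowledge formulas, then so does the limit `M_ω` with transition
relation `⋃ₖ RTₖ(Mₖ)`. -/
theorem limit_providesWitness {S P A : Type} (E : A → Set (S × S))
    (L : S → Set P) (S0 : Set S) (T : ℕ → Set (S × S))
    (hcoh : ∀ k k' : ℕ, k ≤ k' → RTk S0 (T k') k = RTk S0 (T k) k)
    (Tω : Set (S × S)) (hTω : Tω = ⋃ k, RTk S0 (T k) k)
    (hwit : ∀ k : ℕ, ∀ (a : A) (φ : EFrm P A),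
      providesWitness E L S0 (T k) a φ) :
    ∀ (a : A) (φ : EFrm P A), providesWitness E L S0 Tω a φ := by
  subst hTω
  intro a φ k s hs hK
  have hRSω : ∀ j : ℕ, RSk S0 (⋃ k, RTk S0 (T k) k) j = RSk S0 (T j) j := fun j =>
    RSk_eq_of_RTk_eq (RTk_omega S0 T hcoh j)
  have hRScoh : ∀ {m M : ℕ}, m ≤ M → RSk S0 (T M) m = RSk S0 (T m) m :=
    fun {m M} h => RSk_eq_of_RTk_eq (hcoh m M h)
  simp only [ksat] at hK
  push_neg at hK
  obtain ⟨s', hs', hE, hns⟩ := hK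
  obtain ⟨j, hj⟩ := Set.mem_iUnion.mp hs'
  rw [hRSω j] at hj
  set M := max k j with hM
  have hskM : s ∈ RSk S0 (T M) k := by
    rw [hRScoh (le_max_left k j), ← hRSω k]; exact hs
  have hs'M : s' ∈ RSk S0 (T M) M := by
    refine RSk_mono S0 (T M) (le_max_right k j) ?_
    rw [hRScoh (le_max_right k j)]; exact hj
  have hns' : ¬ ksat E L S0 (T M) s' φ := fun h =>
    hns ((ksat_transfer E L S0 T hcoh hwit φ M s' hs'M).mp h)
  have hKM : ¬ ksat E L S0 (T M) s (.K a φ) := fun h =>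
    hns' (h s' (mem_Reach_of_RSk hs'M) hE)
  obtain ⟨s'', hs'', hE'', hns''⟩ := hwit M a φ k s hskM hKM
  have hs''M : s'' ∈ RSk S0 (T M) M := RSk_mono S0 (T M) (le_max_left k j) hs''
  refine ⟨s'', ?_, hE'', fun h =>
    hns'' ((ksat_transfer E L S0 T hcoh hwit φ M s'' hs''M).mpr h)⟩
  rw [hRSω k, ← hRScoh (le_max_left k j)]; exact hs''

end KBP
end

section
/- For any constructive fixed point Y = ⟦Γ⟧Y of an epistemically guarded transition system Γ, the lower bound is pre-fixed and the upper bound is post-fixed under ordinary interpretation: Y_μ ⊆ ⟦Γ⟧(Y_μ) and ⟦Γ⟧(Y_ν) ⊆ Y_ν (as epistemic transition structures, i.e., inclusion of transition relations). Consequently, every solution M = ⟦Γ⟧M of Γ satisfies (μΓ)_μ ⊆ M ⊆ (μΓ)_ν for the least constructive fixed point μΓ. -/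
namespace KBP

/-- Positive and negative satisfaction over a must/can structure, as a pair. -/
def psns (E : A → Set (S × S)) (L : S → Set P) (S0 : Set S)
    (Tμ Tν : Set (S × S)) : EFrm P A → (S → Prop) × (S → Prop)
  | .prop p => (fun s => p ∈ L s, fun s => p ∉ L s)
  | .nprop p => (fun s => p ∉ L s, fun s => p ∈ L s)
  | .fls => (fun _ => False, fun _ => True)
  | .tru => (fun _ => True, fun _ => False)
  | .neg φ => ((psns E L S0 Tμ Tν φ).2, (psns E L S0 Tμ Tν φ).1)
  | .and φ ψ =>
      (fun s => (psns E L S0 Tμ Tν φ).1 s ∧ (psns E L S0 Tμ Tν ψ).1 s,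
       fun s => (psns E L S0 Tμ Tν φ).2 s ∨ (psns E L S0 Tμ Tν ψ).2 s)
  | .or φ ψ =>
      (fun s => (psns E L S0 Tμ Tν φ).1 s ∨ (psns E L S0 Tμ Tν ψ).1 s,
       fun s => (psns E L S0 Tμ Tν φ).2 s ∧ (psns E L S0 Tμ Tν ψ).2 s)
  | .K a φ =>
      (fun s => ∀ s' ∈ Reach S0 Tν, (s, s') ∈ E a → (psns E L S0 Tμ Tν φ).1 s',
       fun s => ∃ s' ∈ Reach S0 Tμ, (s, s') ∈ E a ∧ (psns E L S0 Tμ Tν φ).2 s')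
  | .M a φ =>
      (fun s => ∃ s' ∈ Reach S0 Tμ, (s, s') ∈ E a ∧ (psns E L S0 Tμ Tν φ).1 s',
       fun s => ∀ s' ∈ Reach S0 Tν, (s, s') ∈ E a → (psns E L S0 Tμ Tν φ).2 s')

/-- Positive satisfaction `Y, s ⊨ₚ φ`. -/
def psat (E : A → Set (S × S)) (L : S → Set P) (S0 : Set S)
    (Tμ Tν : Set (S × S)) (s : S) (φ : EFrm P A) : Prop :=
  (psns E L S0 Tμ Tν φ).1 s

/-- Negative satisfaction `Y, s ⊨ₙ φ`. -/
def nsat (E : A → Set (S × S)) (L : S → Set P) (S0 : Set S)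
    (Tμ Tν : Set (S × S)) (s : S) (φ : EFrm P A) : Prop :=
  (psns E L S0 Tμ Tν φ).2 s

/-- Lower part of the constructive interpretation. -/
def interpMu (E : A → Set (S × S)) (L : S → Set P) (S0 : Set S)
    (Γ : Set (EFrm P A × Set (S × S))) (Tμ Tν : Set (S × S)) : Set (S × S) :=
  {p | ∃ g ∈ Γ, p ∈ g.2 ∧ p.1 ∈ Reach S0 Tμ ∧ psat E L S0 Tμ Tν p.1 g.1}

/-- Upper part of the constructive interpretation. -/
def interpNu (E : A → Set (S × S)) (L : S → Set P) (S0 : Set S)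
    (Γ : Set (EFrm P A × Set (S × S))) (Tμ Tν : Set (S × S)) : Set (S × S) :=
  {p | ∃ g ∈ Γ, p ∈ g.2 ∧ p.1 ∈ Reach S0 Tν ∧ ¬ nsat E L S0 Tμ Tν p.1 g.1}

/-- Ordinary interpretation of an epistemically guarded transition system. -/
def interpT (E : A → Set (S × S)) (L : S → Set P) (S0 : Set S)
    (Γ : Set (EFrm P A × Set (S × S))) (T : Set (S × S)) : Set (S × S) :=
  {p | ∃ g ∈ Γ, p ∈ g.2 ∧ p.1 ∈ Reach S0 T ∧ ksat E L S0 T p.1 g.1}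

theorem Reach_mono {S : Type} (S0 : Set S) {T T' : Set (S × S)} (h : T ⊆ T') :
    Reach S0 T ⊆ Reach S0 T' := by
  have key : ∀ k, ∀ s ∈ RSk S0 T k, s ∈ RSk S0 T' k := by
    intro k
    induction k with
    | zero => exact fun s hs => hs
    | succ k ih =>
      rintro s (hs | ⟨t, ht, htT⟩)
      · exact Or.inl (ih s hs)
      · exact Or.inr ⟨t, ih t ht, h htT⟩
  intro s hs
  rcases Set.mem_iUnion.1 hs with ⟨k, hk⟩
  exact Set.mem_iUnion.2 ⟨k, key k s hk⟩

theorem psns_mono {S P A : Type} (E : A → Set (S × S)) (L : S → Set P)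
    (S0 : Set S) {Tμ Tν Tμ' Tν' : Set (S × S)} (hμ : Tμ ⊆ Tμ') (hν : Tν' ⊆ Tν)
    (φ : EFrm P A) :
    (∀ s, (psns E L S0 Tμ Tν φ).1 s → (psns E L S0 Tμ' Tν' φ).1 s) ∧
    (∀ s, (psns E L S0 Tμ Tν φ).2 s → (psns E L S0 Tμ' Tν' φ).2 s) := by
  induction φ with
  | prop p => exact ⟨fun s h => h, fun s h => h⟩
  | nprop p => exact ⟨fun s h => h, fun s h => h⟩
  | fls => exact ⟨fun s h => h, fun s h => h⟩
  | tru => exact ⟨fun s h => h, fun s h => h⟩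
  | neg φ ih => exact ⟨fun s h => ih.2 s h, fun s h => ih.1 s h⟩
  | and φ ψ ihφ ihψ =>
    exact ⟨fun s h => ⟨ihφ.1 s h.1, ihψ.1 s h.2⟩,
      fun s h => h.elim (fun h => Or.inl (ihφ.2 s h)) (fun h => Or.inr (ihψ.2 s h))⟩
  | or φ ψ ihφ ihψ =>
    exact ⟨fun s h => h.elim (fun h => Or.inl (ihφ.1 s h)) (fun h => Or.inr (ihψ.1 s h)),
      fun s h => ⟨ihφ.2 s h.1, ihψ.2 s h.2⟩⟩
  | K a φ ih =>
    constructor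
    · intro s h s' hs' hE
      exact ih.1 s' (h s' (Reach_mono S0 hν hs') hE)
    · rintro s ⟨s', hs', hE, hn⟩
      exact ⟨s', Reach_mono S0 hμ hs', hE, ih.2 s' hn⟩
  | M a φ ih =>
    constructor
    · rintro s ⟨s', hs', hE, hp⟩
      exact ⟨s', Reach_mono S0 hμ hs', hE, ih.1 s' hp⟩
    · intro s h s' hs' hE
      exact ih.2 s' (h s' (Reach_mono S0 hν hs') hE)

theorem psns_decided {S P A : Type} (E : A → Set (S × S)) (L : S → Set P)
    (S0 : Set S) (T : Set (S × S)) (φ : EFrm P A) :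
    (∀ s, (psns E L S0 T T φ).1 s ↔ ksat E L S0 T s φ) ∧
    (∀ s, (psns E L S0 T T φ).2 s ↔ ¬ ksat E L S0 T s φ) := by
  induction φ with
  | prop p => exact ⟨fun s => Iff.rfl, fun s => Iff.rfl⟩
  | nprop p => exact ⟨fun s => Iff.rfl, fun s => not_not.symm⟩
  | fls => exact ⟨fun s => Iff.rfl, fun s => by simp [psns, ksat]⟩
  | tru => exact ⟨fun s => Iff.rfl, fun s => by simp [psns, ksat]⟩
  | neg φ ih =>
    exact ⟨fun s => ih.2 s, fun s => by
      rw [show (psns E L S0 T T φ.neg).2 = (psns E L S0 T T φ).1 from rfl, ih.1 s]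
      simp [ksat]⟩
  | and φ ψ ihφ ihψ =>
    constructor
    · intro s; simp only [psns]; rw [ihφ.1 s, ihψ.1 s]; rfl
    · intro s; simp only [psns]; rw [ihφ.2 s, ihψ.2 s]
      show _ ↔ ¬(ksat E L S0 T s φ ∧ ksat E L S0 T s ψ)
      tauto
  | or φ ψ ihφ ihψ =>
    constructor
    · intro s; simp only [psns]; rw [ihφ.1 s, ihψ.1 s]; rfl
    · intro s; simp only [psns]; rw [ihφ.2 s, ihψ.2 s]
      show _ ↔ ¬(ksat E L S0 T s φ ∨ ksat E L S0 T s ψ)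
      tauto
  | K a φ ih =>
    constructor
    · intro s
      constructor
      · intro h s' hs' hE; exact (ih.1 s').1 (h s' hs' hE)
      · intro h s' hs' hE; exact (ih.1 s').2 (h s' hs' hE)
    · intro s
      show (∃ s' ∈ Reach S0 T, (s, s') ∈ E a ∧ (psns E L S0 T T φ).2 s') ↔
        ¬ ∀ s' ∈ Reach S0 T, (s, s') ∈ E a → ksat E L S0 T s' φ
      push_neg
      constructor
      · rintro ⟨s', hs', hE, hn⟩; exact ⟨s', hs', hE, (ih.2 s').1 hn⟩
      · rintro ⟨s', hs', hE, hn⟩; exact ⟨s', hs', hE, (ih.2 s').2 hn⟩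
  | M a φ ih =>
    constructor
    · intro s
      show (∃ s' ∈ Reach S0 T, (s, s') ∈ E a ∧ (psns E L S0 T T φ).1 s') ↔
        ∃ s' ∈ Reach S0 T, (s, s') ∈ E a ∧ ksat E L S0 T s' φ
      constructor
      · rintro ⟨s', hs', hE, hp⟩; exact ⟨s', hs', hE, (ih.1 s').1 hp⟩
      · rintro ⟨s', hs', hE, hp⟩; exact ⟨s', hs', hE, (ih.1 s').2 hp⟩
    · intro s
      show (∀ s' ∈ Reach S0 T, (s, s') ∈ E a → (psns E L S0 T T φ).2 s') ↔
        ¬ ∃ s' ∈ Reach S0 T, (s, s') ∈ E a ∧ ksat E L S0 T s' φ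
      push_neg
      constructor
      · intro h s' hs' hE; exact (ih.2 s').1 (h s' hs' hE)
      · intro h s' hs' hE; exact (ih.2 s').2 (h s' hs' hE)

/-- For any constructive fixed point `Y` of `Γ`, the lower bound is pre-fixed
and the upper bound is post-fixed under the ordinary interpretation; and every
solution of `Γ` lies between the bounds of the least constructive fixed
point. -/
theorem fixed_point_bounds {S P A : Type} (E : A → Set (S × S))
    (L : S → Set P) (S0 : Set S) (Γ : Set (EFrm P A × Set (S × S)))
    (Tμ Tν : Set (S × S)) (hμν : Tμ ⊆ Tν)
    (hfixμ : interpMu E L S0 Γ Tμ Tν = Tμ)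
    (hfixν : interpNu E L S0 Γ Tμ Tν = Tν)
    (μμ μν : Set (S × S)) (hμ : μμ ⊆ μν)
    (hμfixμ : interpMu E L S0 Γ μμ μν = μμ)
    (hμfixν : interpNu E L S0 Γ μμ μν = μν)
    (hμleast : ∀ Tμ' Tν' : Set (S × S), Tμ' ⊆ Tν' →
      interpMu E L S0 Γ Tμ' Tν' = Tμ' → interpNu E L S0 Γ Tμ' Tν' = Tν' →
      μμ ⊆ Tμ' ∧ Tν' ⊆ μν) :
    (Tμ ⊆ interpT E L S0 Γ Tμ ∧ interpT E L S0 Γ Tν ⊆ Tν) ∧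
    (∀ M : Set (S × S), interpT E L S0 Γ M = M → μμ ⊆ M ∧ M ⊆ μν) := by
  have hpre : Tμ ⊆ interpT E L S0 Γ Tμ := by
    intro p hp
    rw [← hfixμ] at hp
    rcases hp with ⟨g, hg, hpg, hr, hsat⟩
    refine ⟨g, hg, hpg, hr, ?_⟩
    exact (psns_decided E L S0 Tμ g.1).1 p.1 |>.1
      ((psns_mono E L S0 (le_refl Tμ) hμν g.1).1 p.1 hsat)
  have hpost : interpT E L S0 Γ Tν ⊆ Tν := by
    rintro p ⟨g, hg, hpg, hr, hsat⟩
    rw [← hfixν]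
    refine ⟨g, hg, hpg, hr, fun hn => ?_⟩
    exact ((psns_decided E L S0 Tν g.1).2 p.1).1
      ((psns_mono E L S0 hμν (le_refl Tν) g.1).2 p.1 hn) hsat
  refine ⟨⟨hpre, hpost⟩, fun M hM => ?_⟩
  have hMμ : interpMu E L S0 Γ M M = M := by
    rw [show interpMu E L S0 Γ M M = interpT E L S0 Γ M from ?_, hM]
    ext p
    constructor
    · rintro ⟨g, hg, hpg, hr, hsat⟩
      exact ⟨g, hg, hpg, hr, ((psns_decided E L S0 M g.1).1 p.1).1 hsat⟩
    · rintro ⟨g, hg, hpg, hr, hsat⟩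
      exact ⟨g, hg, hpg, hr, ((psns_decided E L S0 M g.1).1 p.1).2 hsat⟩
  have hMν : interpNu E L S0 Γ M M = M := by
    rw [show interpNu E L S0 Γ M M = interpT E L S0 Γ M from ?_, hM]
    ext p
    constructor
    · rintro ⟨g, hg, hpg, hr, hsat⟩
      refine ⟨g, hg, hpg, hr, ?_⟩
      by_contra hk
      exact hsat (((psns_decided E L S0 M g.1).2 p.1).2 hk)
    · rintro ⟨g, hg, hpg, hr, hsat⟩
      exact ⟨g, hg, hpg, hr, fun hn =>
        ((psns_decided E L S0 M g.1).2 p.1).1 hn hsat⟩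
  exact hμleast M M (le_refl M) hMμ hMν

end KBP
end
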